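/- For the NC(1) distribution with parameter β ∈ (0,1) and α = β/(1-β), the CDF satisfies F((1-β)^{-1/2}) = 1 − Φ(-√α)/2 and F(−(1-β)^{-1/2}) = Φ(-√α)/2. -/

import Mathlib

open MeasureTheory Real Set
open Filter

/-- The standard normal cumulative distribution function. -/
noncomputable def Phi (t : ℝ) : ℝ := ∫ u in Set.Iic t, Real.exp (-u ^ 2 / 2) / Real.sqrt (2 * π)

namespace NC1


noncomputable def gauss (u : ℝ) : ℝ := Real.exp (-u ^ 2 / 2) / Real.sqrt (2 * π)

lemma gauss_eq : gauss = fun u : ℝ => Real.exp (-(1/2) * u ^ 2) * (Real.sqrt (2 * π))⁻¹ := by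
  funext u
  rw [gauss, show -u ^ 2 / 2 = -(1/2) * u ^ 2 by ring, div_eq_mul_inv]

lemma gauss_cont : Continuous gauss := by
  rw [gauss_eq]; fun_prop

lemma gauss_pos (u : ℝ) : 0 < gauss u :=
  div_pos (Real.exp_pos _) (Real.sqrt_pos.mpr (by positivity))

lemma integrable_gauss : Integrable gauss := by
  rw [gauss_eq]
  exact (integrable_exp_neg_mul_sq (by norm_num)).mul_const _

lemma integral_gauss : ∫ u, gauss u = 1 := by
  rw [gauss_eq]
  rw [MeasureTheory.integral_mul_const, integral_gaussian]
  rw [show π / (1/2 : ℝ) = 2 * π by ring]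
  rw [mul_inv_cancel₀ (Real.sqrt_ne_zero'.mpr (by positivity))]

lemma gauss_neg (u : ℝ) : gauss (-u) = gauss u := by simp [gauss]

lemma Phi_eq (t : ℝ) : Phi t = ∫ u in Iic t, gauss u := rfl

lemma Phi_neg (t : ℝ) : Phi (-t) = ∫ u in Ioi t, gauss u := by
  rw [Phi_eq, ← integral_comp_neg_Ioi]
  simp_rw [gauss_neg]

lemma Phi_one_sub (t : ℝ) : Phi t = 1 - Phi (-t) := by
  have h := intervalIntegral.integral_Iic_add_Ioi (b := t) integrable_gauss.integrableOn integrable_gauss.integrableOn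
  rw [Phi_eq, Phi_neg]
  rw [integral_gauss] at h
  linarith

lemma Phi_zero : Phi 0 = 1/2 := by
  have := Phi_one_sub 0
  rw [neg_zero] at this
  linarith

lemma Phi_pos (t : ℝ) : 0 < Phi t := by
  rw [Phi_eq]
  rw [setIntegral_pos_iff_support_of_nonneg_ae
      (Filter.Eventually.of_forall fun u => (gauss_pos u).le) integrable_gauss.integrableOn]
  have : Function.support gauss = univ := eq_univ_of_forall fun u => (gauss_pos u).ne'
  rw [this, univ_inter, Real.volume_Iic]
  exact ENNReal.zero_lt_top

lemma Phi_hasDerivAt (t : ℝ) : HasDerivAt Phi (gauss t) t := by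
  have hfun : Phi = fun u => Phi 0 + ∫ x in (0:ℝ)..u, gauss x := by
    funext u
    have := intervalIntegral.integral_Iic_sub_Iic (f := gauss) (a := (0:ℝ)) (b := u)
      integrable_gauss.integrableOn integrable_gauss.integrableOn
    rw [Phi_eq, Phi_eq]
    linarith
  rw [hfun]
  exact (intervalIntegral.integral_hasDerivAt_right
    integrable_gauss.intervalIntegrable
    (gauss_cont.stronglyMeasurableAtFilter _ _)
    gauss_cont.continuousAt).const_add _

lemma Phi_continuous : Continuous Phi :=
  continuous_iff_continuousAt.mpr fun t => (Phi_hasDerivAt t).continuousAt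

lemma integral_Ioi_exp (t : ℝ) : ∫ u in Ioi t, Real.exp (-u ^ 2 / 2) = Real.sqrt (2 * π) * Phi (-t) := by
  rw [Phi_neg]
  have : ∀ u : ℝ, gauss u = Real.exp (-u ^ 2 / 2) * (Real.sqrt (2 * π))⁻¹ := fun u => by
    rw [gauss, div_eq_mul_inv]
  simp_rw [this]
  rw [MeasureTheory.integral_mul_const]
  field_simp



lemma cont_main (x : ℝ) :
    Continuous fun u : ℝ => Real.exp (-(x * (1 + u ^ 2)) / 2) / (1 + u ^ 2) :=
  Continuous.div (by fun_prop) (by fun_prop) (fun u => by positivity)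

-- integrability of the main integrand
lemma norm_le_bound {a : ℝ} (ha : 0 ≤ a) (u : ℝ) :
    ‖Real.exp (-(a * (1 + u ^ 2)) / 2) / (1 + u ^ 2)‖ ≤ ‖(1 + u ^ 2)⁻¹‖ := by
  have h1 : (0:ℝ) < 1 + u ^ 2 := by positivity
  rw [Real.norm_eq_abs, Real.norm_eq_abs, abs_of_pos (by positivity), abs_of_pos (by positivity)]
  rw [div_le_iff₀ h1, inv_mul_cancel₀ h1.ne']
  exact Real.exp_le_one_iff.mpr (by nlinarith)

lemma integrable_main {a : ℝ} (ha : 0 ≤ a) :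
    Integrable (fun u : ℝ => Real.exp (-(a * (1 + u ^ 2)) / 2) / (1 + u ^ 2)) :=
  integrable_inv_one_add_sq.mono (cont_main a).aestronglyMeasurable
    (Filter.Eventually.of_forall (norm_le_bound ha))

lemma integrable_expfac {a : ℝ} (ha : 0 < a) :
    Integrable (fun u : ℝ => Real.exp (-(a * (1 + u ^ 2)) / 2)) := by
  have : (fun u : ℝ => Real.exp (-(a * (1 + u ^ 2)) / 2))
      = fun u : ℝ => Real.exp (-a/2) * Real.exp (-(a/2) * u ^ 2) := by
    funext u
    rw [← Real.exp_add]
    ring_nf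
  rw [this]
  exact (integrable_exp_neg_mul_sq (by linarith)).const_mul _

-- derivative of the parametric integral
lemma hasDerivAt_J (s : Set ℝ) {a : ℝ} (ha : 0 < a) :
    HasDerivAt (fun x => ∫ u in s, Real.exp (-(x * (1 + u ^ 2)) / 2) / (1 + u ^ 2))
      (∫ u in s, -Real.exp (-(a * (1 + u ^ 2)) / 2) / 2) a := by
  have h := hasDerivAt_integral_of_dominated_loc_of_deriv_le (μ := volume.restrict s)
    (F := fun x (u : ℝ) => Real.exp (-(x * (1 + u ^ 2)) / 2) / (1 + u ^ 2))
    (F' := fun x (u : ℝ) => -Real.exp (-(x * (1 + u ^ 2)) / 2) / 2)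
    (x₀ := a) (s := Metric.ball a (a/2))
    (bound := fun u => Real.exp (-(a/2 * (1 + u ^ 2)) / 2) / 2)
    (Metric.ball_mem_nhds a (half_pos ha))
    (Filter.Eventually.of_forall fun x => (cont_main x).aestronglyMeasurable.restrict)
    ((integrable_main ha.le).restrict)
    ((by fun_prop :
        Continuous fun u : ℝ => -Real.exp (-(a * (1 + u ^ 2)) / 2) / 2)).aestronglyMeasurable.restrict
    ?_ ?_ ?_
  · exact h.2
  · refine Filter.Eventually.of_forall fun u => fun x hx => ?_
    have hx2 : a/2 ≤ x := by
      have := abs_lt.mp (mem_ball_iff_norm.mp hx)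
      linarith [this.1]
    have h1 : (0:ℝ) < 1 + u ^ 2 := by positivity
    have hn : ‖-Real.exp (-(x * (1 + u ^ 2)) / 2) / 2‖ = Real.exp (-(x * (1 + u ^ 2)) / 2) / 2 := by
      rw [norm_div, norm_neg, Real.norm_eq_abs, Real.norm_eq_abs,
        abs_of_pos (Real.exp_pos _), abs_of_pos (by norm_num : (0:ℝ) < 2)]
    rw [hn]
    have := Real.exp_le_exp.mpr (show -(x * (1 + u ^ 2)) / 2 ≤ -(a/2 * (1 + u ^ 2)) / 2 by nlinarith)
    linarith
  · exact ((integrable_expfac (half_pos ha)).div_const 2).restrict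
  · refine Filter.Eventually.of_forall fun u => fun x hx => ?_
    have h1 : (0:ℝ) < 1 + u ^ 2 := by positivity
    have hd := (((hasDerivAt_id x).mul_const (1 + u ^ 2)).neg.div_const 2)
    have := (hd.exp).div_const (1 + u ^ 2)
    simp only [Pi.neg_apply, id] at this
    refine this.congr_deriv ?_
    field_simp



lemma contWithin_J (s : Set ℝ) :
    ContinuousWithinAt (fun x => ∫ u in s, Real.exp (-(x * (1 + u ^ 2)) / 2) / (1 + u ^ 2))
      (Ici 0) 0 := by
  refine continuousWithinAt_of_dominated (bound := fun u => (1 + u ^ 2)⁻¹)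
    (Filter.Eventually.of_forall fun x => (cont_main x).aestronglyMeasurable.restrict) ?_
    integrable_inv_one_add_sq.restrict ?_
  · refine eventually_nhdsWithin_of_forall fun x hx => Filter.Eventually.of_forall fun u => ?_
    have := norm_le_bound (hx : (0:ℝ) ≤ x) u
    rw [Real.norm_eq_abs (((1:ℝ) + u ^ 2)⁻¹), abs_of_pos (by positivity)] at this
    exact this
  · exact Filter.Eventually.of_forall fun u =>
      (Continuous.continuousWithinAt (by
        exact Continuous.div (by fun_prop) (by fun_prop) (fun _ => by positivity)))

lemma master (s : Set ℝ) (g : ℝ → ℝ)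
    (hg0 : g 0 = ∫ u in s, ((1:ℝ) + u ^ 2)⁻¹)
    (hgc : ContinuousWithinAt g (Ici 0) 0)
    (hg' : ∀ x, 0 < x → HasDerivAt g (∫ u in s, -Real.exp (-(x * (1 + u ^ 2)) / 2) / 2) x)
    {a : ℝ} (ha : 0 < a) :
    ∫ u in s, Real.exp (-(a * (1 + u ^ 2)) / 2) / (1 + u ^ 2) = g a := by
  set J := fun x => ∫ u in s, Real.exp (-(x * (1 + u ^ 2)) / 2) / (1 + u ^ 2) with hJ
  have hJ0 : J 0 = ∫ u in s, ((1:ℝ) + u ^ 2)⁻¹ := by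
    simp only [hJ, zero_mul, neg_zero, zero_div, Real.exp_zero, one_div]
  have key : ∀ ε ∈ Ioc (0:ℝ) a, J a - g a = J ε - g ε := by
    intro ε hε
    have h := eq_of_has_deriv_right_eq (a := ε) (b := a)
      (f' := fun x => ∫ u in s, -Real.exp (-(x * (1 + u ^ 2)) / 2) / 2)
      (f := J) (g := fun x => g x + (J ε - g ε))
      (fun x hx => (hasDerivAt_J s (lt_of_lt_of_le hε.1 hx.1)).hasDerivWithinAt)
      (fun x hx => (((hg' x (lt_of_lt_of_le hε.1 hx.1)).add_const _)).hasDerivWithinAt)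
      (fun x hx => ((hasDerivAt_J s (lt_of_lt_of_le hε.1 hx.1)).continuousAt).continuousWithinAt)
      (fun x hx => (((hg' x (lt_of_lt_of_le hε.1 hx.1)).add_const _)).continuousAt.continuousWithinAt)
      (by ring)
    have h2 := h a ⟨hε.2, le_refl a⟩
    linarith [h2]
  have h1 : Tendsto (fun ε => J ε - g ε) (nhdsWithin 0 (Ioi 0)) (nhds (J 0 - g 0)) :=
    (((contWithin_J s).sub hgc).mono_left (nhdsWithin_mono 0 Ioi_subset_Ici_self))
  have h2 : J 0 - g 0 = 0 := by rw [hJ0, hg0]; ring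
  have h4 : (fun ε => J ε - g ε) =ᶠ[nhdsWithin (0:ℝ) (Ioi 0)] fun _ => J a - g a := by
    filter_upwards [Ioc_mem_nhdsGT ha] with ε hε using (key ε hε).symm
  have h5 := tendsto_nhds_unique (h1.congr' h4) (tendsto_const_nhds)
  linarith [h5, h2]

lemma integral_Ioi_inv : ∫ u in Ioi (1:ℝ), ((1:ℝ) + u ^ 2)⁻¹ = π / 4 := by
  have h := integral_Ioi_of_hasDerivAt_of_tendsto (f := Real.arctan)
    (f' := fun x => ((1:ℝ) + x ^ 2)⁻¹) (a := 1) (m := π / 2)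
    Real.continuous_arctan.continuousWithinAt
    (fun x _ => by simpa [one_div] using Real.hasDerivAt_arctan x)
    integrable_inv_one_add_sq.integrableOn
    (Real.tendsto_arctan_atTop.mono_right nhdsWithin_le_nhds)
  rw [h, Real.arctan_one]
  ring



-- tail gaussian integral
lemma tail_int {a : ℝ} (ha : 0 < a) :
    ∫ u in Ioi (1:ℝ), Real.exp (-(a * (1 + u ^ 2)) / 2)
      = Real.exp (-a/2) * (Real.sqrt (2 * π) * Phi (-Real.sqrt a)) / Real.sqrt a := by
  have hsa : (0:ℝ) < Real.sqrt a := Real.sqrt_pos.mpr ha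
  have h1 : ∀ u : ℝ, Real.exp (-(a * (1 + u ^ 2)) / 2)
      = Real.exp (-a/2) * Real.exp (-(Real.sqrt a * u) ^ 2 / 2) := by
    intro u
    rw [← Real.exp_add]
    congr 1
    rw [mul_pow, Real.sq_sqrt ha.le]
    ring
  simp_rw [h1]
  rw [MeasureTheory.integral_const_mul]
  rw [integral_comp_mul_left_Ioi (fun v => Real.exp (-v ^ 2 / 2)) 1 hsa]
  rw [mul_one, integral_Ioi_exp, smul_eq_mul]
  field_simp

lemma univ_int {a : ℝ} (ha : 0 < a) :
    ∫ u : ℝ, Real.exp (-(a * (1 + u ^ 2)) / 2)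
      = Real.exp (-a/2) * Real.sqrt (2 * π) / Real.sqrt a := by
  have h1 : ∀ u : ℝ, Real.exp (-(a * (1 + u ^ 2)) / 2)
      = Real.exp (-a/2) * Real.exp (-(a/2) * u ^ 2) := by
    intro u
    rw [← Real.exp_add]
    ring_nf
  simp_rw [h1]
  rw [MeasureTheory.integral_const_mul, integral_gaussian]
  rw [show π / (a/2) = 2 * π / a by ring, Real.sqrt_div (by positivity) a]
  ring


lemma sqrt2pi_ne : Real.sqrt (2 * π) ≠ 0 := Real.sqrt_ne_zero'.mpr (by positivity)

lemma hasDerivAt_PhiSqrt {x : ℝ} (hx : 0 < x) :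
    HasDerivAt (fun x => Phi (-Real.sqrt x))
      (Real.exp (-x/2) / Real.sqrt (2 * π) * -(1 / (2 * Real.sqrt x))) x := by
  have hs := (Real.hasDerivAt_sqrt (ne_of_gt hx)).neg
  have hPhi := (Phi_hasDerivAt (-Real.sqrt x)).comp x hs
  refine hPhi.congr_deriv ?_
  unfold gauss
  rw [neg_sq, Real.sq_sqrt hx.le]

lemma identity1 {a : ℝ} (ha : 0 < a) :
    ∫ u in Ioi (1:ℝ), Real.exp (-(a * (1 + u ^ 2)) / 2) / (1 + u ^ 2)
      = π * Phi (-Real.sqrt a) ^ 2 := by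
  refine master (Ioi 1) (fun x => π * Phi (-Real.sqrt x) ^ 2) ?_ ?_ ?_ ha
  · show π * Phi (-Real.sqrt 0) ^ 2 = _
    rw [integral_Ioi_inv, Real.sqrt_zero, neg_zero, Phi_zero]
    ring
  · exact (continuous_const.mul ((Phi_continuous.comp (Real.continuous_sqrt.neg)).pow 2)).continuousWithinAt
  · intro x hx
    have hsx : (0:ℝ) < Real.sqrt x := Real.sqrt_pos.mpr hx
    have h := ((hasDerivAt_PhiSqrt hx).pow 2).const_mul π
    refine h.congr_deriv ?_
    have hint : ∫ u in Ioi (1:ℝ), -Real.exp (-(x * (1 + u ^ 2)) / 2) / 2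
        = -(Real.exp (-x/2) * (Real.sqrt (2 * π) * Phi (-Real.sqrt x)) / Real.sqrt x) / 2 := by
      rw [MeasureTheory.integral_div, integral_neg, tail_int hx]
    rw [hint, pow_one]
    set S := Real.sqrt (2 * π) with hS
    have hS2 : S ^ 2 = 2 * π := Real.sq_sqrt (by positivity)
    have hSne : S ≠ 0 := by positivity
    rw [show π = S ^ 2 / 2 by rw [hS2]; ring]
    field_simp
    ring

lemma identity2 {a : ℝ} (ha : 0 < a) :
    ∫ u : ℝ, Real.exp (-(a * (1 + u ^ 2)) / 2) / (1 + u ^ 2)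
      = 2 * π * Phi (-Real.sqrt a) := by
  have h := master univ (fun x => 2 * π * Phi (-Real.sqrt x)) ?_ ?_ ?_ ha
  · rw [Measure.restrict_univ] at h
    exact h
  · show 2 * π * Phi (-Real.sqrt 0) = _
    rw [Measure.restrict_univ, integral_univ_inv_one_add_sq, Real.sqrt_zero, neg_zero, Phi_zero]
    ring
  · exact (continuous_const.mul (Phi_continuous.comp (Real.continuous_sqrt.neg))).continuousWithinAt
  · intro x hx
    have hsx : (0:ℝ) < Real.sqrt x := Real.sqrt_pos.mpr hx
    have h := (hasDerivAt_PhiSqrt hx).const_mul (2*π)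
    refine h.congr_deriv ?_
    have hint : ∫ u in (univ : Set ℝ), -Real.exp (-(x * (1 + u ^ 2)) / 2) / 2
        = -(Real.exp (-x/2) * Real.sqrt (2 * π) / Real.sqrt x) / 2 := by
      rw [Measure.restrict_univ, MeasureTheory.integral_div, integral_neg, univ_int hx]
    rw [hint]
    set S := Real.sqrt (2 * π) with hS
    have hS2 : S ^ 2 = 2 * π := Real.sq_sqrt (by positivity)
    have hSne : S ≠ 0 := by positivity
    rw [show π = S ^ 2 / 2 by rw [hS2]; ring]
    field_simp



lemma integral_comp_mul_left_Iic (g : ℝ → ℝ) (c : ℝ) {b : ℝ} (hb : 0 < b) :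
    (∫ x in Iic c, g (b * x)) = b⁻¹ • ∫ x in Iic (b * c), g x := by
  have h1 := integral_comp_neg_Ioi (-c) (fun x => g (b * x))
  simp only [neg_neg] at h1
  rw [← h1]
  have h2 := integral_comp_mul_left_Ioi (fun y => g (-y)) (-c) hb
  simp only [mul_neg, neg_mul] at h2 ⊢
  rw [h2]
  have h3 := integral_comp_neg_Ioi (-(b * c)) g
  simp only [neg_neg] at h3
  rw [h3]

lemma even_part {a : ℝ} :
    ∫ u in Iic (-1:ℝ), Real.exp (-(a * (1 + u ^ 2)) / 2) / (1 + u ^ 2)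
      = ∫ u in Ioi (1:ℝ), Real.exp (-(a * (1 + u ^ 2)) / 2) / (1 + u ^ 2) := by
  have h := integral_comp_neg_Iic (-1 : ℝ)
    (fun u : ℝ => Real.exp (-(a * (1 + u ^ 2)) / 2) / (1 + u ^ 2))
  simp only [neg_neg, neg_sq] at h
  exact h

lemma Iic_one_part {a : ℝ} (ha : 0 < a) :
    ∫ u in Iic (1:ℝ), Real.exp (-(a * (1 + u ^ 2)) / 2) / (1 + u ^ 2)
      = 2 * π * Phi (-Real.sqrt a) - π * Phi (-Real.sqrt a) ^ 2 := by
  have h := intervalIntegral.integral_Iic_add_Ioi (b := (1:ℝ)) (μ := volume)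
    (integrable_main ha.le).integrableOn (integrable_main ha.le).integrableOn
  rw [identity1 ha] at h
  rw [identity2 ha] at h
  linarith


end NC1

open NC1

theorem nc1_cdf_special_values (β c₁ α : ℝ) (hβ : 0 < β) (hβ1 : β < 1) (hα : α = β / (1 - β))
    (hc₁ : c₁ = Real.sqrt (1 - β) * Real.exp (-α / 2) / (2 * π * Phi (-Real.sqrt α))) :
    (∫ y in Set.Iic ((Real.sqrt (1 - β))⁻¹),
        c₁ * Real.exp (-(β * y ^ 2) / 2) / (1 + (1 - β) * y ^ 2)
      = 1 - Phi (-Real.sqrt α) / 2) ∧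
    (∫ y in Set.Iic (-(Real.sqrt (1 - β))⁻¹),
        c₁ * Real.exp (-(β * y ^ 2) / 2) / (1 + (1 - β) * y ^ 2)
      = Phi (-Real.sqrt α) / 2) := by
  have hb1 : (0:ℝ) < 1 - β := by linarith
  set s := Real.sqrt (1 - β) with hs_def
  have hs : 0 < s := Real.sqrt_pos.mpr hb1
  have hs2 : s ^ 2 = 1 - β := Real.sq_sqrt hb1.le
  have hα0 : 0 < α := by rw [hα]; positivity
  have hαβ : α * (1 - β) = β := by rw [hα]; field_simp
  set Φ := Phi (-Real.sqrt α) with hΦ_def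
  have hΦ : 0 < Φ := Phi_pos _
  set K := c₁ * Real.exp (α / 2) with hK_def
  -- pointwise rewrite of the integrand
  have hpt : ∀ y : ℝ, c₁ * Real.exp (-(β * y ^ 2) / 2) / (1 + (1 - β) * y ^ 2)
      = K * (Real.exp (-(α * (1 + (s * y) ^ 2)) / 2) / (1 + (s * y) ^ 2)) := by
    intro y
    have h1 : (s * y) ^ 2 = (1 - β) * y ^ 2 := by rw [mul_pow, hs2]
    have h2 : Real.exp (α / 2) *
        (Real.exp (-(α * (1 + (1 - β) * y ^ 2)) / 2) / (1 + (1 - β) * y ^ 2))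
        = Real.exp (-(β * y ^ 2) / 2) / (1 + (1 - β) * y ^ 2) := by
      rw [← mul_div_assoc, ← Real.exp_add]
      congr 2
      linear_combination (-(y ^ 2) / 2) * hαβ
    rw [h1, hK_def, mul_assoc, h2, mul_div_assoc]
  have key : ∀ c : ℝ, (∫ y in Iic c,
        c₁ * Real.exp (-(β * y ^ 2) / 2) / (1 + (1 - β) * y ^ 2))
      = s⁻¹ * (K * ∫ u in Iic (s * c),
          Real.exp (-(α * (1 + u ^ 2)) / 2) / (1 + u ^ 2)) := by
    intro c
    simp_rw [hpt]
    rw [integral_comp_mul_left_Iic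
      (fun u => K * (Real.exp (-(α * (1 + u ^ 2)) / 2) / (1 + u ^ 2))) c hs]
    rw [smul_eq_mul, MeasureTheory.integral_const_mul]
  have hsK : s⁻¹ * K = 1 / (2 * π * Φ) := by
    have he : Real.exp (-α / 2) * Real.exp (α / 2) = 1 := by
      rw [← Real.exp_add, show -α / 2 + α / 2 = (0:ℝ) by ring, Real.exp_zero]
    rw [hK_def, hc₁]
    rw [show s⁻¹ * (s * Real.exp (-α / 2) / (2 * π * Φ) * Real.exp (α / 2))
        = (s⁻¹ * s) * ((Real.exp (-α / 2) * Real.exp (α / 2)) / (2 * π * Φ)) by ring]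
    rw [inv_mul_cancel₀ hs.ne', he, one_mul]
  constructor
  · rw [key, mul_inv_cancel₀ hs.ne', Iic_one_part hα0, ← hΦ_def, ← mul_assoc, hsK]
    field_simp
  · rw [key, mul_neg, mul_inv_cancel₀ hs.ne', even_part, identity1 hα0, ← hΦ_def,
      ← mul_assoc, hsK]
    field_simp
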